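/- arXiv:1911.12995 — 3 statements merged into one kernel-verified Lean document; each statement's English description precedes it below -/
import Mathlib

section
/- Let G be a graph and let u and v be two adjacent vertices of G such that N_G(u) \ {v} ⊆ N_G(v) \ {u}. Let F be a treedepth decomposition of G in which u is an ancestor of v, and let F' be the rooted forest obtained from F by exchanging the positions of u and v (i.e., swapping the two vertices u and v in F). Then F' is a treedepth decomposition of G of the same depth as F. -/
/-- `a` is the parent of `b` in the rooted forest given by `par`. -/
def ParentRel {V : Type} (par : V → Option V) (a b : V) : Prop := par b = some a

/-- `a` is a strict ancestor of `b`. -/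
def Anc {V : Type} (par : V → Option V) : V → V → Prop :=
  Relation.TransGen (ParentRel par)

/-- `par` describes a rooted forest (no cycles). -/
def IsForest {V : Type} (par : V → Option V) : Prop := ∀ v, ¬ Anc par v v

/-- `par` is a treedepth decomposition of `G`: a rooted forest on the vertex set of `G`
such that for every edge one endpoint is an ancestor of the other. -/
def IsTDDecomp {V : Type} (G : SimpleGraph V) (par : V → Option V) : Prop :=
  IsForest par ∧ ∀ u v, G.Adj u v → Anc par u v ∨ Anc par v u

/-- The depth of vertex `v` in the forest: the number of vertices on the path
from its root to `v`, i.e. one plus the number of strict ancestors of `v`. -/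
noncomputable def vdepth {V : Type} (par : V → Option V) (v : V) : ℕ :=
  Nat.card {a // Anc par a v} + 1

/-- The height (depth) of the forest: the maximal depth of a vertex. -/
noncomputable def fheight {V : Type} (par : V → Option V) : ℕ := ⨆ v, vdepth par v

/-- The treedepth of `G`: the minimum depth of a treedepth decomposition of `G`. -/
noncomputable def treedepth {V : Type} [Finite V] (G : SimpleGraph V) : ℕ :=
  sInf {d | ∃ par : V → Option V, IsTDDecomp G par ∧ fheight par = d}

/-!
Exchanging `u` and `v` is a relabelling of the forest along a bijection, so the ancestor
relation, the depth of every vertex and the height are transported along the swap, and the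
result is again a forest. Only the edge condition needs an argument. An edge `ub` with `b ≠ v`
becomes `vb`, and `b` is a neighbour of `v`, hence comparable with `v`. An edge `vb` with
`b ≠ u` becomes `ub`: either `v` is an ancestor of `b`, and then so is `u`, or `b` and `u` are
both ancestors of `v`, and the ancestors of a vertex form a chain.
-/

open Relation

section Forest

variable {V : Type} {par : V → Option V}

theorem ParentRel.unique {a b w : V} (ha : ParentRel par a w) (hb : ParentRel par b w) :
    a = b :=
  Option.some_injective _ (ha.symm.trans hb)

/-- Every vertex has at most one parent, so the strict ancestors of a vertex form a chain. -/
theorem Anc.eq_or_symmGen {a b w : V} (ha : Anc par a w) (hb : Anc par b w) :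
    a = b ∨ SymmGen (Anc par) a b := by
  induction ha generalizing b with
  | single haw =>
    cases hb with
    | single hbw => exact .inl (haw.unique hbw)
    | tail hbc hcw => obtain rfl := hcw.unique haw; exact .inr (.inr hbc)
  | tail hac hcw ih =>
    cases hb with
    | single hbw => obtain rfl := hbw.unique hcw; exact .inr (.inl hac)
    | tail hbd hdw => obtain rfl := hdw.unique hcw; exact ih hbd

theorem symmGen_anc_of_anc {u v b : V} (hanc : Anc par u v) (hb : SymmGen (Anc par) v b)
    (hbu : b ≠ u) : SymmGen (Anc par) u b := by
  rcases hb with hvb | hbv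
  · exact .inl (hanc.trans hvb)
  · exact (hanc.eq_or_symmGen hbv).resolve_left hbu.symm

end Forest

section Relabel

variable {V W : Type}

/-- For `σ = Equiv.swap u v` this is the forest `F'` of the statement, `swap` being an
involution. -/
def relabel (σ : V ≃ W) (par : V → Option V) : W → Option W :=
  fun x => (par (σ.symm x)).map σ

variable (σ : V ≃ W) (par : V → Option V)

theorem parentRel_relabel {a b : W} :
    ParentRel (relabel σ par) a b ↔ ParentRel par (σ.symm a) (σ.symm b) := by
  simp [ParentRel, relabel, Option.map_eq_some_iff, ← Equiv.eq_symm_apply]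

theorem anc_relabel {a b : W} :
    Anc (relabel σ par) a b ↔ Anc par (σ.symm a) (σ.symm b) := by
  refine ⟨fun h => TransGen.lift σ.symm (fun _ _ => (parentRel_relabel σ par).1) _ _ h,
    fun h => ?_⟩
  have := TransGen.lift σ (fun _ _ h => (parentRel_relabel σ par).2 (by simpa using h)) _ _ h
  simpa [Function.onFun, Anc] using this

theorem isForest_relabel : IsForest (relabel σ par) ↔ IsForest par := by
  simp only [IsForest, anc_relabel]
  exact σ.symm.forall_congr_right (q := fun v => ¬Anc par v v)

theorem vdepth_relabel (x : W) : vdepth (relabel σ par) x = vdepth par (σ.symm x) :=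
  congrArg (· + 1) <| Nat.card_congr <| σ.symm.subtypeEquiv fun _ => anc_relabel σ par

theorem fheight_relabel : fheight (relabel σ par) = fheight par := by
  simp only [fheight, vdepth_relabel]
  exact σ.symm.surjective.iSup_comp _

end Relabel

section Swap

variable {V : Type} [DecidableEq V] {G : SimpleGraph V} {u v : V} {par : V → Option V}

theorem symmGen_anc_swap_of_adj (hN : G.neighborSet u \ {v} ⊆ G.neighborSet v)
    (hcomp : ∀ x y, G.Adj x y → SymmGen (Anc par) x y) (hanc : Anc par u v) {a b : V}
    (hab : G.Adj a b) (hbu : b ≠ u) (hbv : b ≠ v) :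
    SymmGen (Anc par) (Equiv.swap u v a) (Equiv.swap u v b) := by
  rw [Equiv.swap_apply_of_ne_of_ne hbu hbv]
  rcases eq_or_ne a u with rfl | hau
  · rw [Equiv.swap_apply_left]
    exact hcomp _ _ (hN ⟨hab, hbv⟩)
  rcases eq_or_ne a v with rfl | hav
  · rw [Equiv.swap_apply_right]
    exact symmGen_anc_of_anc hanc (hcomp _ _ hab) hbu
  · rw [Equiv.swap_apply_of_ne_of_ne hau hav]
    exact hcomp _ _ hab

theorem isTDDecomp_relabel_swap (hN : G.neighborSet u \ {v} ⊆ G.neighborSet v)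
    (hpar : IsTDDecomp G par) (hanc : Anc par u v) :
    IsTDDecomp G (relabel (Equiv.swap u v) par) := by
  refine ⟨(isForest_relabel _ par).2 hpar.1, fun a b hab => ?_⟩
  rw [anc_relabel, anc_relabel, Equiv.symm_swap]
  by_cases hb : b = u ∨ b = v
  · by_cases ha : a = u ∨ a = v
    · rcases ha with rfl | rfl <;> rcases hb with rfl | rfl <;> simp_all
    · obtain ⟨hau, hav⟩ := not_or.1 ha
      exact (symmGen_anc_swap_of_adj hN hpar.2 hanc hab.symm hau hav).symm
  · obtain ⟨hbu, hbv⟩ := not_or.1 hb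
    exact symmGen_anc_swap_of_adj hN hpar.2 hanc hab hbu hbv

end Swap

theorem td_swap_general {V : Type} [DecidableEq V] (G : SimpleGraph V) (u v : V)
    (hN : G.neighborSet u \ {v} ⊆ G.neighborSet v \ {u})
    (par : V → Option V) (hpar : IsTDDecomp G par) (hanc : Anc par u v) :
    IsTDDecomp G (fun x => (par (Equiv.swap u v x)).map (Equiv.swap u v)) ∧
    fheight (fun x => (par (Equiv.swap u v x)).map (Equiv.swap u v)) = fheight par := by
  change IsTDDecomp G (relabel (Equiv.swap u v) par) ∧
    fheight (relabel (Equiv.swap u v) par) = fheight par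
  exact ⟨isTDDecomp_relabel_swap (fun _ hx => (hN hx).1) hpar hanc, fheight_relabel _ par⟩

/-- If `u` and `v` are adjacent, `N(u) \ {v} ⊆ N(v) \ {u}`, and `F` is a treedepth
decomposition of `G` in which `u` is an ancestor of `v`, then the forest obtained from `F`
by swapping the vertices `u` and `v` is again a treedepth decomposition of `G`,
of the same depth. -/
theorem td_swap {V : Type} [Finite V] [DecidableEq V] (G : SimpleGraph V) (u v : V)
    (huv : G.Adj u v) (hN : G.neighborSet u \ {v} ⊆ G.neighborSet v \ {u})
    (par : V → Option V) (hpar : IsTDDecomp G par) (hanc : Anc par u v) :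
    IsTDDecomp G (fun x => (par (Equiv.swap u v x)).map (Equiv.swap u v)) ∧
    fheight (fun x => (par (Equiv.swap u v x)).map (Equiv.swap u v)) = fheight par :=
  td_swap_general G u v hN par hpar hanc
end

section
/- Let G be a graph and let v be a vertex of G that is adjacent to two distinct vertices l and l', each of which has degree one in G. Then td(G) = td(G − {l'}), where G − {l'} is the graph obtained from G by deleting the vertex l'. -/
/-!
Deleting a vertex `w` never increases treedepth: in a decomposition, attach the children of `w`
to the parent of `w`; ancestry among the remaining vertices is unchanged.

Conversely, take an optimal decomposition of `G - l'`. As `l` is pendant at `v`, one may assume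
that `v` is an ancestor of `l`: otherwise `l` lies above `v`, and taking `l` out of its chain and
hanging it directly below `v` does not increase the height. Now give `l'` the same parent as `l`.
Then `l'` has exactly the ancestors of `l`, among them its only neighbour `v`, and the height
does not change.
-/

section Forest

variable {V : Type} {f g : V → Option V} {a b c w : V}

theorem vdepth_eq_ncard (f : V → Option V) (b : V) : vdepth f b = {a | Anc f a b}.ncard + 1 :=
  rfl

theorem vdepth_le_vdepth [Finite V] (h : ∀ a, Anc f a b → Anc g a c) :
    vdepth f b ≤ vdepth g c := by
  simp only [vdepth_eq_ncard, add_le_add_iff_right]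
  exact Set.ncard_le_ncard h

theorem not_anc_of_forall_ne_some (hf : ∀ x, f x ≠ some w) (b : V) : ¬ Anc f w b := by
  intro hwb
  obtain ⟨c, hc, -⟩ := Relation.TransGen.head'_iff.mp hwb
  exact hf c hc

theorem anc_iff_of_eq_some (hb : f b = some c) : Anc f a b ↔ a = c ∨ Anc f a c := by
  rw [Anc, Relation.TransGen.tail'_iff]
  simp only [ParentRel, hb, Option.some_inj, exists_eq_right']
  rw [Relation.reflTransGen_iff_eq_or_transGen, eq_comm]

theorem anc_congr_right (h : f b = f c) : Anc f a b ↔ Anc f a c := by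
  simp only [Anc, Relation.TransGen.tail'_iff, ParentRel, h]

theorem Anc.of_eqOn (hf : ∀ x, f x ≠ some w) (hfg : ∀ x, x ≠ w → f x = g x) (hb : b ≠ w)
    (h : Anc f a b) : Anc g a b := by
  induction h with
  | single hab => exact .single ((hfg _ hb).symm.trans hab)
  | @tail c b _ hcb ih =>
    have hc : c ≠ w := by rintro rfl; exact hf b hcb
    exact (ih hc).tail ((hfg _ hb).symm.trans hcb)

theorem anc_congr_of_eqOn (hf : ∀ x, f x ≠ some w) (hg : ∀ x, g x ≠ some w)
    (hfg : ∀ x, x ≠ w → f x = g x) (hb : b ≠ w) : Anc f a b ↔ Anc g a b :=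
  ⟨.of_eqOn hf hfg hb, .of_eqOn hg (fun x hx => (hfg x hx).symm) hb⟩

end Forest

section Transfer

open Function

variable {W V : Type} {φ : W → V} {g : W → Option W} {f : V → Option V}

theorem anc_apply_iff (hφ : ∀ b, f (φ b) = (g b).map φ) {a : V} {b : W} :
    Anc f a (φ b) ↔ ∃ a', Anc g a' b ∧ φ a' = a := by
  constructor
  · intro h
    generalize hy : φ b = y at h
    induction h generalizing b with
    | single hab =>
      obtain ⟨a', ha', rfl⟩ := Option.map_eq_some_iff.mp ((hφ b).symm.trans (hy ▸ hab))
      exact ⟨a', .single ha', rfl⟩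
    | tail _ hcy ih =>
      obtain ⟨c', hc', rfl⟩ := Option.map_eq_some_iff.mp ((hφ b).symm.trans (hy ▸ hcy))
      obtain ⟨a', h', rfl⟩ := ih rfl
      exact ⟨a', h'.tail hc', rfl⟩
  · rintro ⟨a', h, rfl⟩
    induction h with
    | single hab => exact .single (show f (φ _) = _ by rw [hφ, hab]; rfl)
    | tail _ hcb ih => exact ih.tail (show f (φ _) = _ by rw [hφ, hcb]; rfl)

theorem anc_apply_apply_iff (hφ : ∀ b, f (φ b) = (g b).map φ) (hinj : φ.Injective) {a b : W} :
    Anc f (φ a) (φ b) ↔ Anc g a b := by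
  rw [anc_apply_iff hφ]
  exact ⟨fun ⟨a', h, ha'⟩ => hinj ha' ▸ h, fun h => ⟨a, h, rfl⟩⟩

theorem vdepth_apply (hφ : ∀ b, f (φ b) = (g b).map φ) (hinj : φ.Injective) (b : W) :
    vdepth f (φ b) = vdepth g b := by
  have himage : {a | Anc f a (φ b)} = φ '' {a' | Anc g a' b} := by
    ext a
    exact anc_apply_iff hφ
  rw [vdepth_eq_ncard, vdepth_eq_ncard, himage, Set.ncard_image_of_injective _ hinj]

def pullback (p : W → Option W) (φ : W → V) (σ : V → W) : V → Option V :=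
  fun x => (p (σ x)).map φ

variable {p : W → Option W} {σ : V → W}

theorem pullback_apply (hσ : LeftInverse σ φ) (b : W) : pullback p φ σ (φ b) = (p b).map φ := by
  rw [pullback, hσ b]

theorem anc_pullback_iff (hσ : LeftInverse σ φ) {a : V} {x : V} :
    Anc (pullback p φ σ) a x ↔ ∃ a', Anc p a' (σ x) ∧ φ a' = a :=
  (anc_congr_right (by rw [pullback_apply hσ]; rfl)).trans (anc_apply_iff (pullback_apply hσ))

theorem anc_pullback_apply_iff (hσ : LeftInverse σ φ) {a : W} {x : V} :
    Anc (pullback p φ σ) (φ a) x ↔ Anc p a (σ x) := by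
  rw [anc_pullback_iff hσ]
  exact ⟨fun ⟨a', h, ha'⟩ => hσ.injective ha' ▸ h, fun h => ⟨a, h, rfl⟩⟩

theorem isForest_pullback (hσ : LeftInverse σ φ) (hp : IsForest p) :
    IsForest (pullback p φ σ) := by
  intro x hx
  obtain ⟨a, h, rfl⟩ := (anc_pullback_iff hσ).mp hx
  rw [hσ a] at h
  exact hp a h

theorem vdepth_pullback (hσ : LeftInverse σ φ) (x : V) :
    vdepth (pullback p φ σ) x = vdepth p (σ x) := by
  rw [← vdepth_apply (pullback_apply hσ) hσ.injective, vdepth_eq_ncard, vdepth_eq_ncard]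
  congr 2
  ext a
  exact anc_congr_right (by rw [pullback_apply hσ]; rfl)

end Transfer

section Bypass

variable {V : Type} {par : V → Option V} {a b w : V}

open Classical in
noncomputable def bypass (par : V → Option V) (w : V) : V → Option V :=
  fun x => if par x = some w then par w else par x

theorem bypass_ne_some (hf : IsForest par) (x : V) : bypass par w x ≠ some w := by
  unfold bypass
  split_ifs with hx
  · exact fun hw => hf w (.single hw)
  · exact hx

theorem anc_of_anc_bypass (h : Anc (bypass par w) a b) : Anc par a b := by
  refine Relation.TransGen.lift' id (fun x y hxy => ?_) _ _ h
  rw [ParentRel, bypass] at hxy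
  split_ifs at hxy with hy
  · exact Relation.TransGen.tail (.single hxy) hy
  · exact .single hxy

theorem anc_bypass_iff (hf : IsForest par) : Anc (bypass par w) a b ↔ Anc par a b ∧ a ≠ w := by
  constructor
  · refine fun h => ⟨anc_of_anc_bypass h, ?_⟩
    rintro rfl
    exact not_anc_of_forall_ne_some (bypass_ne_some hf) b h
  rintro ⟨h, ha⟩
  have hbypass : ∀ {x y}, par x = some y → y ≠ w → bypass par w x = some y := fun hxy hy => by
    rw [bypass, if_neg (by rw [hxy]; exact fun h => hy (Option.some_inj.mp h)), hxy]
  induction h with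
  | single hab => exact .single (hbypass hab ha)
  | @tail c b _ hcb ih =>
    by_cases hc : c = w
    · subst hc
      have hw : par c ≠ some c := fun h => hf c (.single h)
      refine (anc_congr_right ?_).mpr ih
      have hcb' : par b = some c := hcb
      rw [bypass, bypass, if_pos hcb', if_neg hw]
    · exact ih.tail (hbypass hcb hc)

theorem vdepth_bypass_le [Finite V] (x : V) : vdepth (bypass par w) x ≤ vdepth par x :=
  vdepth_le_vdepth fun _ => anc_of_anc_bypass

end Bypass

open Classical in
noncomputable def restrictTo {V : Type} (f : V → Option V) (s : Set V) : s → Option s :=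
  fun b => (f b).bind fun a => if h : a ∈ s then some ⟨a, h⟩ else none

theorem map_restrictTo {V : Type} {f : V → Option V} {s : Set V}
    (hs : ∀ x a, f x = some a → a ∈ s) (b : s) : (restrictTo f s b).map Subtype.val = f b := by
  unfold restrictTo
  cases h : f b with
  | none => rfl
  | some a => simp [hs b a h]

section Reattach

variable {V : Type} {par : V → Option V} {a b l v : V}

open Classical in
noncomputable def reattach (par : V → Option V) (l v : V) : V → Option V :=
  fun x => if x = l then some v else bypass par l x

theorem reattach_ne_some (hf : IsForest par) (hvl : v ≠ l) (x : V) :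
    reattach par l v x ≠ some l := by
  unfold reattach
  split_ifs
  · exact fun h => hvl (Option.some_inj.mp h)
  · exact bypass_ne_some hf x

theorem anc_reattach_iff (hf : IsForest par) (hvl : v ≠ l) (hb : b ≠ l) :
    Anc (reattach par l v) a b ↔ Anc par a b ∧ a ≠ l :=
  (anc_congr_of_eqOn (reattach_ne_some hf hvl) (bypass_ne_some hf) (fun _ hx => if_neg hx) hb).trans
    (anc_bypass_iff hf)

theorem anc_reattach_self_iff (hf : IsForest par) (hvl : v ≠ l) :
    Anc (reattach par l v) a l ↔ a = v ∨ Anc par a v ∧ a ≠ l :=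
  (anc_iff_of_eq_some (f := reattach par l v) (if_pos rfl)).trans
    (or_congr_right (anc_reattach_iff hf hvl hvl))

theorem isForest_reattach (hf : IsForest par) (hvl : v ≠ l) : IsForest (reattach par l v) := by
  intro x hx
  by_cases hxl : x = l
  · subst hxl
    rcases (anc_reattach_self_iff hf hvl).mp hx with rfl | ⟨-, hne⟩
    · exact hvl rfl
    · exact hne rfl
  · exact hf x ((anc_reattach_iff hf hvl hxl).mp hx).1

theorem vdepth_reattach_le [Finite V] (hf : IsForest par) (hvl : v ≠ l) {x : V} (hx : x ≠ l) :
    vdepth (reattach par l v) x ≤ vdepth par x :=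
  vdepth_le_vdepth fun _ ha => ((anc_reattach_iff hf hvl hx).mp ha).1

theorem vdepth_reattach_self_le [Finite V] (hf : IsForest par) (hvl : v ≠ l) (hlv : Anc par l v) :
    vdepth (reattach par l v) l ≤ vdepth par v := by
  have hset : {a | Anc (reattach par l v) a l} = insert v ({a | Anc par a v} \ {l}) := by
    ext a
    simp [anc_reattach_self_iff hf hvl]
  rw [vdepth_eq_ncard, vdepth_eq_ncard, hset,
    ← Set.ncard_sdiff_singleton_add_one (s := {a | Anc par a v}) hlv]
  exact Nat.add_le_add_right (Set.ncard_insert_le _ _) 1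

end Reattach

def finPath (n : ℕ) : Fin n → Option (Fin n) :=
  fun j => if h : (j : ℕ) = 0 then none else some ⟨j - 1, by omega⟩

theorem finPath_eq_some {n : ℕ} {i j : Fin n} : finPath n j = some i ↔ (i : ℕ) + 1 = j := by
  unfold finPath
  split_ifs with h
  · simp only [false_iff]
    omega
  · simp only [Option.some_inj, Fin.ext_iff]
    omega

theorem anc_finPath_iff {n : ℕ} {i j : Fin n} : Anc (finPath n) i j ↔ i < j := by
  constructor
  · intro h
    induction h with
    | single hij => have := finPath_eq_some.mp hij; rw [Fin.lt_def]; omega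
    | tail _ hkj ih => have := finPath_eq_some.mp hkj; rw [Fin.lt_def] at ih ⊢; omega
  · intro h
    obtain ⟨k, hk⟩ : ∃ k, (j : ℕ) = i + k + 1 := ⟨j - i - 1, by rw [Fin.lt_def] at h; omega⟩
    induction k generalizing j with
    | zero => exact .single (finPath_eq_some.mpr (by omega))
    | succ k ih =>
      have hj : (j : ℕ) - 1 < n := by omega
      have hprev := ih (j := ⟨j - 1, hj⟩) (by rw [Fin.lt_def]; simp only; omega)
        (by simp only; omega)
      exact hprev.tail (finPath_eq_some.mpr (by simp only; omega))

section Treedepth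

variable {V : Type} {G : SimpleGraph V} {par : V → Option V}

theorem vdepth_le_fheight [Finite V] (par : V → Option V) (x : V) : vdepth par x ≤ fheight par :=
  le_ciSup (Set.finite_range _).bddAbove x

theorem fheight_le {n : ℕ} (h : ∀ x, vdepth par x ≤ n) : fheight par ≤ n :=
  ciSup_le' h

theorem treedepth_le [Finite V] (h : IsTDDecomp G par) : treedepth G ≤ fheight par :=
  Nat.sInf_le ⟨par, h, rfl⟩

theorem exists_isTDDecomp [Finite V] (G : SimpleGraph V) : ∃ par, IsTDDecomp G par := by
  obtain ⟨n, ⟨e⟩⟩ := Finite.exists_equiv_fin V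
  have hσ : Function.LeftInverse e e.symm := e.apply_symm_apply
  have hanc : ∀ x y, Anc (pullback (finPath n) e.symm e) x y ↔ e x < e y := fun x y => by
    rw [← anc_finPath_iff, ← anc_pullback_apply_iff hσ, e.symm_apply_apply]
  refine ⟨pullback (finPath n) e.symm e, fun x hx => lt_irrefl _ ((hanc x x).mp hx),
    fun x y hxy => ?_⟩
  simp only [hanc]
  exact lt_or_gt_of_ne (e.injective.ne hxy.ne)

theorem exists_fheight_eq_treedepth [Finite V] (G : SimpleGraph V) :
    ∃ par, IsTDDecomp G par ∧ fheight par = treedepth G := by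
  obtain ⟨par, h⟩ := exists_isTDDecomp G
  exact Nat.sInf_mem (s := {d | ∃ par, IsTDDecomp G par ∧ fheight par = d}) ⟨_, par, h, rfl⟩

theorem IsTDDecomp.exists_anc_of_pendant [Finite V] (hd : IsTDDecomp G par) {v l : V}
    (hvl : G.Adj v l) (hl : ∀ u, G.Adj u l → u = v) :
    ∃ par', IsTDDecomp G par' ∧ fheight par' ≤ fheight par ∧ Anc par' v l := by
  rcases hd.2 v l hvl with hv_anc_l | hlv
  · exact ⟨par, hd, le_rfl, hv_anc_l⟩
  have hne := hvl.ne
  have hv_anc_l : Anc (reattach par l v) v l := (anc_reattach_self_iff hd.1 hne).mpr (.inl rfl)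
  refine ⟨reattach par l v, ⟨isForest_reattach hd.1 hne, fun x y hxy => ?_⟩, fheight_le fun x => ?_,
    hv_anc_l⟩
  · by_cases hx : x = l
    · subst hx
      exact .inr (hl y hxy.symm ▸ hv_anc_l)
    by_cases hy : y = l
    · subst hy
      exact .inl (hl x hxy ▸ hv_anc_l)
    exact (hd.2 x y hxy).imp (fun h => (anc_reattach_iff hd.1 hne hy).mpr ⟨h, hx⟩)
      (fun h => (anc_reattach_iff hd.1 hne hx).mpr ⟨h, hy⟩)
  · by_cases hx : x = l
    · subst hx
      exact (vdepth_reattach_self_le hd.1 hne hlv).trans (vdepth_le_fheight par v)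
    · exact (vdepth_reattach_le hd.1 hne hx).trans (vdepth_le_fheight par x)

theorem treedepth_induce_ne_le [Finite V] (G : SimpleGraph V) (w : V) :
    treedepth (G.induce {x | x ≠ w}) ≤ treedepth G := by
  obtain ⟨par, hd, hpar⟩ := exists_fheight_eq_treedepth G
  set q := restrictTo (bypass par w) {x | x ≠ w}
  have hq : ∀ b : {x // x ≠ w}, bypass par w b = (q b).map Subtype.val := fun b =>
    (map_restrictTo (s := {x | x ≠ w}) (fun x a ha haw => bypass_ne_some hd.1 x (haw ▸ ha)) b).symm
  have hanc : ∀ a b : {x // x ≠ w}, Anc q a b ↔ Anc par a b := fun a b =>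
    (anc_apply_apply_iff hq Subtype.val_injective).symm.trans
      ((anc_bypass_iff hd.1).trans (and_iff_left a.2))
  have hdq : IsTDDecomp (G.induce {x | x ≠ w}) q :=
    ⟨fun x hx => hd.1 x ((hanc x x).mp hx), fun a b hab => by simpa only [hanc] using hd.2 a b hab⟩
  calc treedepth (G.induce {x | x ≠ w}) ≤ fheight q := treedepth_le hdq
    _ ≤ fheight par := fheight_le fun b => (vdepth_apply hq Subtype.val_injective b).symm.trans_le
        ((vdepth_bypass_le _).trans (vdepth_le_fheight par _))
    _ = treedepth G := hpar

end Treedepth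

theorem treedepth_le_induce_ne_of_twin {V : Type} [Finite V] {G : SimpleGraph V} {v l l' : V}
    (hll' : l ≠ l') (hvl : G.Adj v l) (hl : ∀ u, G.Adj u l → u = v)
    (hl' : ∀ u, G.Adj u l' → u = v) :
    treedepth G ≤ treedepth (G.induce {x | x ≠ l'}) := by
  classical
  have hv : v ≠ l' := by
    rintro rfl
    exact hll' (hl' l hvl.symm)
  let lh : {x // x ≠ l'} := ⟨l, hll'⟩
  obtain ⟨p, hd, hp⟩ := exists_fheight_eq_treedepth (G.induce {x | x ≠ l'})
  obtain ⟨p', hd', hp'p, hvlp'⟩ := hd.exists_anc_of_pendant (v := ⟨v, hv⟩) (l := lh) hvl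
    fun u hu => Subtype.ext (hl u hu)
  -- `l'` is sent to its twin `l`, so that it gets the same parent as `l`.
  let σ : V → {x // x ≠ l'} := fun x => if h : x = l' then lh else ⟨x, h⟩
  have hσ : Function.LeftInverse σ Subtype.val := fun b => dif_neg b.2
  have hσl' : σ l' = lh := dif_pos rfl
  have hanc : ∀ {x y} (hx : x ≠ l') (hy : y ≠ l'),
      Anc p' ⟨x, hx⟩ ⟨y, hy⟩ → Anc (pullback p' Subtype.val σ) x y := fun hx hy h =>
    (anc_pullback_apply_iff hσ (a := ⟨_, hx⟩)).mpr (hσ ⟨_, hy⟩ ▸ h)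
  have hv_anc_l' : Anc (pullback p' Subtype.val σ) v l' :=
    (anc_pullback_apply_iff hσ (a := ⟨v, hv⟩)).mpr (hσl' ▸ hvlp')
  have hdG : IsTDDecomp G (pullback p' Subtype.val σ) := by
    refine ⟨isForest_pullback hσ hd'.1, fun x y hxy => ?_⟩
    by_cases hx : x = l'
    · subst hx
      exact .inr (hl' y hxy.symm ▸ hv_anc_l')
    by_cases hy : y = l'
    · subst hy
      exact .inl (hl' x hxy ▸ hv_anc_l')
    exact (hd'.2 ⟨x, hx⟩ ⟨y, hy⟩ hxy).imp (hanc hx hy) (hanc hy hx)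
  calc treedepth G ≤ fheight (pullback p' Subtype.val σ) := treedepth_le hdG
    _ ≤ fheight p' := fheight_le fun x => (vdepth_pullback hσ x).trans_le (vdepth_le_fheight p' _)
    _ ≤ fheight p := hp'p
    _ = treedepth (G.induce {x | x ≠ l'}) := hp

theorem SimpleGraph.eq_of_adj_of_ncard_neighborSet_eq_one {V : Type} {G : SimpleGraph V}
    {x u v : V} (h : (G.neighborSet x).ncard = 1) (hu : G.Adj x u) (hv : G.Adj x v) : u = v := by
  obtain ⟨a, ha⟩ := Set.ncard_eq_one.mp h
  have hu' : u ∈ G.neighborSet x := hu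
  have hv' : v ∈ G.neighborSet x := hv
  rw [ha] at hu' hv'
  exact hu'.trans hv'.symm

/-- If `v` is adjacent to two distinct vertices `l` and `l'` of degree one,
then `td(G) = td(G - l')`. -/
theorem td_remove_twin_leaf {V : Type} [Finite V] (G : SimpleGraph V) (v l l' : V)
    (hll' : l ≠ l') (hvl : G.Adj v l) (hvl' : G.Adj v l')
    (hdl : (G.neighborSet l).ncard = 1) (hdl' : (G.neighborSet l').ncard = 1) :
    treedepth G = treedepth (G.induce {x | x ≠ l'}) :=
  le_antisymm
    (treedepth_le_induce_ne_of_twin hll' hvl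
      (fun _ hu => G.eq_of_adj_of_ncard_neighborSet_eq_one hdl hu.symm hvl.symm)
      (fun _ hu => G.eq_of_adj_of_ncard_neighborSet_eq_one hdl' hu.symm hvl'.symm))
    (treedepth_induce_ne_le G l')
end

section
/- Let G be a graph and let P = (P_1,…,P_l) be a treedepth-derivation of G such that χ_i(p) ≠ ∅ for every level i and every p ∈ P_i (so every set introduces exactly one vertex; for v ∈ V(G), the set of P introducing v is the unique pair of a level i and a set p ∈ P_i with {v} = χ_i(p)). Let T be the tree with vertex set V(G) having an edge between u and v whenever the set introducing u is a child of the set introducing v or vice versa, rooted at the vertex r with {r} = χ_l(V(G)). Then T is a treedepth decomposition of G of depth at most l − 1. -/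
/-- The children of `p` at level `i`: the sets of level `i - 1` contained in `p`. -/
def childrenAt {V : Type} (P : ℕ → Set (Set V)) (i : ℕ) (p : Set V) : Set (Set V) :=
  {c ∈ P (i - 1) | c ⊆ p}

/-- `χ_i(p)`: the set `p` minus the union of its children at level `i`. -/
def bagAt {V : Type} (P : ℕ → Set (Set V)) (i : ℕ) (p : Set V) : Set V :=
  p \ ⋃₀ childrenAt P i p

/-- `(P 1, …, P l)` is a treedepth-derivation of `G`: every level is a weak partition
(nonempty, pairwise disjoint sets), `P 1 = ∅`, `P l = {V}`, each level refines the
next one (D2), every bag `χ_i(p)` has at most one element (D3), and every edge is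
covered by some set of the derivation whose bag contains one of its endpoints (D4). -/
def IsTDDerivation {V : Type} (G : SimpleGraph V) (l : ℕ) (P : ℕ → Set (Set V)) : Prop :=
  (∀ i, 1 ≤ i → i ≤ l → (∀ p ∈ P i, p.Nonempty) ∧ (P i).PairwiseDisjoint id) ∧
  P 1 = ∅ ∧ P l = {Set.univ} ∧
  (∀ i, 1 ≤ i → i < l → ∀ p ∈ P i, ∃ q ∈ P (i + 1), p ⊆ q) ∧
  (∀ i, 1 ≤ i → i ≤ l → ∀ p ∈ P i, (bagAt P i p).ncard ≤ 1) ∧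
  (∀ u v, G.Adj u v → ∃ i p, 1 ≤ i ∧ i ≤ l ∧ p ∈ P i ∧ u ∈ p ∧ v ∈ p ∧
    (bagAt P i p ∩ {u, v}).Nonempty)

/-- Let `(P 1, …, P l)` be a treedepth-derivation of `G` all of whose bags are nonempty,
so that every set introduces exactly one vertex; `intr x` is the (unique) pair of a level
and a set introducing the vertex `x`. Let `T` (given by `par`) be the tree on `V` where
`y` is the parent of `x` exactly when the set introducing `x` is a child of the set
introducing `y`, rooted at the vertex `r` with `{r} = χ_l(V)`. Then `T` is a treedepth
decomposition of `G` of depth at most `l - 1`. -/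
theorem td_derivation_to_decomp {V : Type} [Finite V] (G : SimpleGraph V) (l : ℕ)
    (P : ℕ → Set (Set V)) (hP : IsTDDerivation G l P)
    (hbag : ∀ i p, 1 ≤ i → i ≤ l → p ∈ P i → (bagAt P i p).Nonempty)
    (intr : V → ℕ × Set V)
    (hintr : ∀ x, 1 ≤ (intr x).1 ∧ (intr x).1 ≤ l ∧ (intr x).2 ∈ P (intr x).1 ∧
      bagAt P (intr x).1 (intr x).2 = {x})
    (hintrUniq : ∀ x i p, 1 ≤ i → i ≤ l → p ∈ P i → bagAt P i p = {x} → (i, p) = intr x)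
    (par : V → Option V)
    (hpar : ∀ x y, par x = some y ↔
      (intr y).1 = (intr x).1 + 1 ∧ (intr x).2 ⊆ (intr y).2)
    (r : V) (hr : bagAt P l Set.univ = {r}) :
    IsTDDecomp G par ∧ par r = none ∧ fheight par ≤ l - 1 := by
  obtain ⟨hpart, hP1, hPl, href, hcard, hedge⟩ := hP
  have hl1 : 1 ≤ l := le_trans (hintr r).1 (hintr r).2.1
  -- every nonempty bag is a singleton on any of its elements
  have hsing : ∀ i p x, 1 ≤ i → i ≤ l → p ∈ P i → x ∈ bagAt P i p → bagAt P i p = {x} := by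
    intro i p x h1 h2 hp hx
    have hle := hcard i h1 h2 p hp
    have hone : ∀ a ∈ bagAt P i p, ∀ b ∈ bagAt P i p, a = b :=
      (Set.ncard_le_one (Set.toFinite _)).mp hle
    ext y
    constructor
    · intro hy; exact hone y hy x hx
    · intro hy; rw [Set.mem_singleton_iff] at hy; rw [hy]; exact hx
  -- disjointness of sets on the same level
  have hdisj : ∀ i p q (x : V), 1 ≤ i → i ≤ l → p ∈ P i → q ∈ P i →
      x ∈ p → x ∈ q → p = q := by
    intro i p q x h1 h2 hp hq hxp hxq
    by_contra hne
    exact Set.disjoint_left.mp ((hpart i h1 h2).2 hp hq hne) hxp hxq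
  -- every introduction level is at least 2
  have hlvl2 : ∀ x, 2 ≤ (intr x).1 := by
    intro x
    obtain ⟨h1, h2, h3, _⟩ := hintr x
    by_contra h
    have : (intr x).1 = 1 := by omega
    rw [this, hP1] at h3
    exact h3
  have hmem_bag : ∀ x, x ∈ (intr x).2 := by
    intro x
    have hx : x ∈ bagAt P (intr x).1 (intr x).2 := by
      rw [(hintr x).2.2.2]; rfl
    exact hx.1
  -- chains up through levels
  have hchain : ∀ j i, 1 ≤ i → i ≤ j → j ≤ l → ∀ p, p ∈ P i → ∃ q ∈ P j, p ⊆ q := by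
    intro j
    induction j with
    | zero => intro i h1 hij _ _ _; omega
    | succ j ih =>
      intro i h1 hij hjl p hp
      rcases Nat.eq_or_lt_of_le hij with heq | hlt
      · exact ⟨p, by rw [← heq]; exact hp, subset_rfl⟩
      · have hij' : i ≤ j := by omega
        obtain ⟨q, hq, hpq⟩ := ih i h1 hij' (by omega) p hp
        obtain ⟨q', hq', hqq'⟩ := href j (by omega) (by omega) q hq
        exact ⟨q', hq', hpq.trans hqq'⟩
  -- membership in a level-i set forces intro level ≤ i
  have hmemle : ∀ i p x, 1 ≤ i → i ≤ l → p ∈ P i → x ∈ p → (intr x).1 ≤ i := by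
    intro i p x h1 h2 hp hx
    by_contra h
    push_neg at h
    obtain ⟨hx1, hx2, hx3, hx4⟩ := hintr x
    obtain ⟨q, hq, hpq⟩ := hchain ((intr x).1 - 1) i h1 (by omega) (by omega) p hp
    obtain ⟨q', hq', hqq'⟩ := href ((intr x).1 - 1) (by omega) (by omega) q hq
    have hq'' : q' ∈ P (intr x).1 := by
      have he : (intr x).1 - 1 + 1 = (intr x).1 := by omega
      rwa [he] at hq'
    have heq : q' = (intr x).2 :=
      hdisj (intr x).1 q' (intr x).2 x hx1 hx2 hq'' hx3 (hqq' (hpq hx)) (hmem_bag x)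
    have hxbag : x ∈ bagAt P (intr x).1 (intr x).2 := by rw [hx4]; rfl
    exact hxbag.2 ⟨q, ⟨hq, by rw [← heq]; exact hqq'⟩, hpq hx⟩
  -- ancestors have strictly larger levels and larger sets
  have hanc : ∀ a b, Anc par a b → (intr b).1 < (intr a).1 ∧ (intr b).2 ⊆ (intr a).2 := by
    intro a b h
    induction h with
    | single h =>
      obtain ⟨h1, h2⟩ := (hpar _ _).mp h
      exact ⟨by omega, h2⟩
    | tail _ h ih =>
      obtain ⟨h1, h2⟩ := (hpar _ _).mp h
      exact ⟨by omega, h2.trans ih.2⟩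
  -- main lemma: if x lies in q at level j above its intro level, the vertex
  -- introduced by q is an ancestor of x
  have hmain : ∀ j q x y, 1 ≤ j → j ≤ l → q ∈ P j → x ∈ q → (intr x).1 < j →
      intr y = (j, q) → Anc par y x := by
    intro j
    induction j using Nat.strong_induction_on with
    | _ j ih =>
    intro q x y h1 h2 hq hx hlt hy
    have hbagq : bagAt P j q = {y} := by
      have hb := (hintr y).2.2.2
      rw [hy] at hb
      exact hb
    have hxny : x ≠ y := by
      intro h
      subst h
      have h3 : (j, q) = intr x := hintrUniq x j q h1 h2 hq hbagq
      rw [← h3] at hlt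
      exact lt_irrefl j hlt
    have hxnb : x ∉ bagAt P j q := by
      rw [hbagq]; simpa using hxny
    have hxu : x ∈ ⋃₀ childrenAt P j q := by
      by_contra h
      exact hxnb ⟨hx, h⟩
    obtain ⟨c, ⟨hc, hcq⟩, hxc⟩ := hxu
    have hj3 : 3 ≤ j := by have := hlvl2 x; omega
    obtain ⟨z, hz⟩ := hbag (j - 1) c (by omega) (by omega) hc
    have hbagc : bagAt P (j - 1) c = {z} := hsing (j - 1) c z (by omega) (by omega) hc hz
    have hz' : (j - 1, c) = intr z := hintrUniq z (j - 1) c (by omega) (by omega) hc hbagc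
    have hparzy : ParentRel par y z := by
      show par z = some y
      rw [hpar z y]
      constructor
      · rw [← hz', hy]; show j = j - 1 + 1; omega
      · rw [← hz', hy]; exact hcq
    rcases eq_or_ne x z with heq | hne
    · exact heq ▸ Relation.TransGen.single hparzy
    · have hxle : (intr x).1 ≤ j - 1 := hmemle (j - 1) c x (by omega) (by omega) hc hxc
      have hxlt : (intr x).1 < j - 1 := by
        rcases lt_or_eq_of_le hxle with h | h
        · exact h
        · exfalso
          have hpx : (intr x).2 ∈ P (j - 1) := by rw [← h]; exact (hintr x).2.2.1
          have hceq : (intr x).2 = c :=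
            hdisj (j - 1) (intr x).2 c x (by omega) (by omega) hpx hc (hmem_bag x) hxc
          have hb : bagAt P (j - 1) c = {x} := by
            rw [← h, ← hceq]; exact (hintr x).2.2.2
          rw [hbagc] at hb
          exact hne (Set.singleton_eq_singleton_iff.mp hb).symm
      have hancz : Anc par z x :=
        ih (j - 1) (by omega) c x z (by omega) (by omega) hc hxc hxlt hz'.symm
      exact Relation.TransGen.head hparzy hancz
  -- edges are covered by the ancestor relation
  have hedge' : ∀ u v, G.Adj u v → Anc par u v ∨ Anc par v u := by
    intro u v hadj
    obtain ⟨i, p, h1, h2, hp, hu, hv, w, hwb, hwuv⟩ := hedge u v hadj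
    have hbagp : bagAt P i p = {w} := hsing i p w h1 h2 hp hwb
    have hiw : (i, p) = intr w := hintrUniq w i p h1 h2 hp hbagp
    have key : ∀ b : V, w ≠ b → b ∈ p → Anc par w b := by
      intro b hab hbp
      have hble : (intr b).1 ≤ i := hmemle i p b h1 h2 hp hbp
      have hblt : (intr b).1 < i := by
        rcases lt_or_eq_of_le hble with h | h
        · exact h
        · exfalso
          have hpb : (intr b).2 ∈ P i := by rw [← h]; exact (hintr b).2.2.1
          have hpeq : (intr b).2 = p :=
            hdisj i (intr b).2 p b h1 h2 hpb hp (hmem_bag b) hbp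
          have hb2 : bagAt P i p = {b} := by
            rw [← h, ← hpeq]; exact (hintr b).2.2.2
          rw [hbagp] at hb2
          exact hab (Set.singleton_eq_singleton_iff.mp hb2)
      exact hmain i p b w h1 h2 hp hbp hblt hiw.symm
    simp only [Set.mem_insert_iff, Set.mem_singleton_iff] at hwuv
    rcases hwuv with h | h
    · subst h
      exact Or.inl (key v hadj.ne hv)
    · subst h
      exact Or.inr (key u hadj.ne' hu)
  have hforest : IsForest par := by
    intro v h
    exact absurd (hanc v v h).1 (lt_irrefl _)
  have hintrr : (l, Set.univ) = intr r :=
    hintrUniq r l Set.univ hl1 le_rfl (by rw [hPl]; exact rfl) hr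
  have hroot : par r = none := by
    cases hpr : par r with
    | none => rfl
    | some y =>
      exfalso
      obtain ⟨h1, _⟩ := (hpar r y).mp hpr
      have hrl : (intr r).1 = l := by rw [← hintrr]
      have hyl := (hintr y).2.1
      omega
  refine ⟨⟨hforest, hedge'⟩, hroot, ?_⟩
  have hdepth : ∀ v, vdepth par v ≤ l - 1 := by
    intro v
    have hfin : Finite (Set.Icc ((intr v).1 + 1) l) := (Set.finite_Icc _ _).to_subtype
    have hcard' : Nat.card {a // Anc par a v} ≤ Nat.card (Set.Icc ((intr v).1 + 1) l) := by
      have hmemIcc : ∀ a : {a // Anc par a v}, (intr a.1).1 ∈ Set.Icc ((intr v).1 + 1) l :=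
        fun a => Set.mem_Icc.mpr ⟨(hanc a.1 v a.2).1, (hintr a.1).2.1⟩
      apply Nat.card_le_card_of_injective
        (fun a => (⟨(intr a.1).1, hmemIcc a⟩ : Set.Icc ((intr v).1 + 1) l))
      intro a b hab
      have hlev : (intr a.1).1 = (intr b.1).1 := congrArg Subtype.val hab
      have hva : v ∈ (intr a.1).2 := (hanc a.1 v a.2).2 (hmem_bag v)
      have hvb : v ∈ (intr b.1).2 := (hanc b.1 v b.2).2 (hmem_bag v)
      have hpb : (intr b.1).2 ∈ P (intr a.1).1 := by
        rw [hlev]; exact (hintr b.1).2.2.1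
      have hseq : (intr a.1).2 = (intr b.1).2 :=
        hdisj (intr a.1).1 _ _ v (hintr a.1).1 (hintr a.1).2.1 (hintr a.1).2.2.1 hpb hva hvb
      have hss : ({a.1} : Set V) = {b.1} := by
        rw [← (hintr a.1).2.2.2, ← (hintr b.1).2.2.2, hlev, hseq]
      exact Subtype.ext (Set.singleton_eq_singleton_iff.mp hss)
    have hIcc : Nat.card (Set.Icc ((intr v).1 + 1) l) = l - (intr v).1 := by
      rw [Nat.card_coe_set_eq, ← Finset.coe_Icc, Set.ncard_coe_finset, Nat.card_Icc]
      omega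
    have h2 := hlvl2 v
    have h3 := (hintr v).2.1
    unfold vdepth
    omega
  rcases isEmpty_or_nonempty V with hV | hV
  · unfold fheight
    rw [ciSup_of_empty]
    exact bot_le
  · exact ciSup_le hdepth
end
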